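/- arXiv:2605.08933 — 3 statements merged into one kernel-verified Lean document; each statement's English description precedes it below -/
import Mathlib

section
/- Suppose L : ℝ^{m×d} → ℝ satisfies the β-smoothness inequality L(W+Δ) ≤ L(W) + ⟨∇L(W), Δ⟩ + (β/2)‖Δ‖_F² for all Δ. Let G = ∇L(W) be nonzero with polar factor P(G). Then for any step size η > 0, the full-matrix Muon update W⁺ = W − η P(G) satisfies L(W⁺) ≤ L(W) − η‖G‖_* + (βη²/2)·rank(G). -/
open Matrix BigOperators

/-- Frobenius (trace) inner product. -/
noncomputable def frobInner {m n : Type*} [Fintype m] [Fintype n]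
    (A B : Matrix m n ℝ) : ℝ := ∑ i, ∑ j, A i j * B i j

lemma frobInner_eq_trace {m n : Type*} [Fintype m] [Fintype n]
    (A B : Matrix m n ℝ) : frobInner A B = (Aᵀ * B).trace := by
  simp only [frobInner, Matrix.trace, Matrix.diag, Matrix.mul_apply, Matrix.transpose_apply]
  rw [Finset.sum_comm]

/-- One-step descent guarantee for full-matrix Muon: if L is β-smooth at W with
gradient G ≠ 0 (compact SVD G = U Σ Vᵀ, polar factor P(G) = U Vᵀ, nuclear norm
‖G‖_* = ∑ σᵢ), then L(W − η P(G)) ≤ L(W) − η ‖G‖_* + (β η²/2) rank(G). -/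
theorem full_matrix_muon_descent
    {m d r : ℕ} (L : Matrix (Fin m) (Fin d) ℝ → ℝ) (β η : ℝ)
    (hβ : 0 ≤ β) (hη : 0 < η)
    (W G : Matrix (Fin m) (Fin d) ℝ) (hG : G ≠ 0)
    (hsmooth : ∀ Δ : Matrix (Fin m) (Fin d) ℝ,
      L (W + Δ) ≤ L W + frobInner G Δ + β / 2 * frobInner Δ Δ)
    (U : Matrix (Fin m) (Fin r) ℝ) (V : Matrix (Fin d) (Fin r) ℝ)
    (σ : Fin r → ℝ)
    (hU : Uᵀ * U = 1) (hV : Vᵀ * V = 1) (hσ : ∀ i, 0 < σ i)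
    (hr : G.rank = r)
    (hSVD : G = U * Matrix.diagonal σ * Vᵀ) :
    L (W - η • (U * Vᵀ)) ≤ L W - η * (∑ i, σ i) + β * η ^ 2 / 2 * (G.rank : ℝ) := by
  have h := hsmooth (-(η • (U * Vᵀ)))
  rw [← sub_eq_add_neg] at h
  have h1 : frobInner G (-(η • (U * Vᵀ))) = -η * ∑ i, σ i := by
    rw [frobInner_eq_trace, Matrix.mul_neg, Matrix.mul_smul, Matrix.trace_neg,
      Matrix.trace_smul, hSVD]
    have key : (U * Matrix.diagonal σ * Vᵀ)ᵀ * (U * Vᵀ)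
        = V * (Matrix.diagonal σ * Vᵀ) := by
      simp only [Matrix.transpose_mul, Matrix.transpose_transpose,
        Matrix.diagonal_transpose, Matrix.mul_assoc]
      rw [← Matrix.mul_assoc Uᵀ U, hU, Matrix.one_mul]
    rw [key, ← Matrix.mul_assoc, Matrix.trace_mul_cycle, hV, Matrix.one_mul,
      Matrix.trace_diagonal, smul_eq_mul]
    ring
  have h2 : frobInner (-(η • (U * Vᵀ))) (-(η • (U * Vᵀ))) = η ^ 2 * r := by
    rw [frobInner_eq_trace]
    have e1 : (-(η • (U * Vᵀ)))ᵀ * (-(η • (U * Vᵀ)))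
        = (η * η) • ((U * Vᵀ)ᵀ * (U * Vᵀ)) := by
      rw [Matrix.transpose_neg, Matrix.neg_mul, Matrix.mul_neg, neg_neg,
        Matrix.transpose_smul, Matrix.smul_mul, Matrix.mul_smul, smul_smul]
    rw [e1, Matrix.trace_smul]
    have e2 : (U * Vᵀ)ᵀ * (U * Vᵀ) = V * Vᵀ := by
      simp only [Matrix.transpose_mul, Matrix.transpose_transpose, Matrix.mul_assoc]
      rw [← Matrix.mul_assoc Uᵀ U, hU, Matrix.one_mul]
    rw [e2, Matrix.trace_mul_comm, hV, Matrix.trace_one, smul_eq_mul,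
      Fintype.card_fin]
    ring
  rw [h1, h2] at h
  calc L (W - η • (U * Vᵀ)) ≤ L W + -η * ∑ i, σ i + β / 2 * (η ^ 2 * r) := h
    _ = L W - η * (∑ i, σ i) + β * η ^ 2 / 2 * (G.rank : ℝ) := by rw [hr]; ring
end

section
/- Suppose L : ℝ^{m×d} → ℝ is β-smooth in the Frobenius norm. Partition W row-wise into M blocks W_i ∈ ℝ^{m_i×d} and correspondingly G = ∇L(W) into blocks G_i, each nonzero. Then the group-wise Muon update W⁺ obtained by subtracting η P(G_i) from each block W_i satisfies L(W⁺) ≤ L(W) − η Σ_{i=1}^M ‖G_i‖_* + (βη²/2) Σ_{i=1}^M rank(G_i). -/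
open Matrix BigOperators

/-- The `i`-th row block of a row-partitioned matrix. -/
def blk {M d : ℕ} {ms : Fin M → ℕ}
    (G : Matrix ((i : Fin M) × Fin (ms i)) (Fin d) ℝ) (i : Fin M) :
    Matrix (Fin (ms i)) (Fin d) ℝ := Matrix.of fun a j => G ⟨i, a⟩ j


section Aux

lemma frobInner_smul_right {m n : Type*} [Fintype m] [Fintype n]
    (c : ℝ) (A B : Matrix m n ℝ) : frobInner A (c • B) = c * frobInner A B := by
  simp only [frobInner, Matrix.smul_apply, smul_eq_mul, Finset.mul_sum]
  refine Finset.sum_congr rfl fun i _ => Finset.sum_congr rfl fun j _ => by ring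

lemma frobInner_smul_left {m n : Type*} [Fintype m] [Fintype n]
    (c : ℝ) (A B : Matrix m n ℝ) : frobInner (c • A) B = c * frobInner A B := by
  simp only [frobInner, Matrix.smul_apply, smul_eq_mul, Finset.mul_sum]
  refine Finset.sum_congr rfl fun i _ => Finset.sum_congr rfl fun j _ => by ring

lemma frobInner_split {M d : ℕ} {ms : Fin M → ℕ}
    (A B : Matrix ((i : Fin M) × Fin (ms i)) (Fin d) ℝ) :
    frobInner A B = ∑ i, frobInner (blk A i) (blk B i) := by
  simp only [frobInner, blk, Matrix.of_apply]
  rw [← Finset.univ_sigma_univ, Finset.sum_sigma]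

end Aux

/-- One-step descent guarantee for group-wise Muon: with a row-wise partition of
W into M blocks, each gradient block Gᵢ nonzero with compact SVD Uᵢ Σᵢ Vᵢᵀ and
polar factor P(Gᵢ) = Uᵢ Vᵢᵀ, the group-wise update W⁺ = W − η O (O stacking the
P(Gᵢ)) satisfies L(W⁺) ≤ L(W) − η ∑ᵢ ‖Gᵢ‖_* + (β η²/2) ∑ᵢ rank(Gᵢ). -/

theorem group_muon_descent
    {M d : ℕ} {ms : Fin M → ℕ} {r : Fin M → ℕ}
    (L : Matrix ((i : Fin M) × Fin (ms i)) (Fin d) ℝ → ℝ) (β η : ℝ)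
    (hβ : 0 ≤ β) (hη : 0 < η)
    (W G : Matrix ((i : Fin M) × Fin (ms i)) (Fin d) ℝ)
    (hsmooth : ∀ Δ : Matrix ((i : Fin M) × Fin (ms i)) (Fin d) ℝ,
      L (W + Δ) ≤ L W + frobInner G Δ + β / 2 * frobInner Δ Δ)
    (hGne : ∀ i, blk G i ≠ 0)
    (U : (i : Fin M) → Matrix (Fin (ms i)) (Fin (r i)) ℝ)
    (V : (i : Fin M) → Matrix (Fin d) (Fin (r i)) ℝ)
    (σ : (i : Fin M) → Fin (r i) → ℝ)
    (hU : ∀ i, (U i)ᵀ * U i = 1) (hV : ∀ i, (V i)ᵀ * V i = 1)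
    (hσ : ∀ i s, 0 < σ i s)
    (hr : ∀ i, (blk G i).rank = r i)
    (hSVD : ∀ i, blk G i = U i * Matrix.diagonal (σ i) * (V i)ᵀ)
    (O : Matrix ((i : Fin M) × Fin (ms i)) (Fin d) ℝ)
    (hO : ∀ i, blk O i = U i * (V i)ᵀ) :
    L (W - η • O) ≤
      L W - η * (∑ i, ∑ s, σ i s) + β * η ^ 2 / 2 * (∑ i, ((blk G i).rank : ℝ)) := by

  have hGO : ∀ i, frobInner (blk G i) (blk O i) = ∑ s, σ i s := by
    intro i
    have h1 : (U i)ᵀ * (U i * (V i)ᵀ) = (V i)ᵀ := by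
      rw [← Matrix.mul_assoc, hU i, Matrix.one_mul]
    rw [frobInner_eq_trace, hSVD i, hO i]
    rw [Matrix.transpose_mul, Matrix.transpose_mul, Matrix.transpose_transpose,
      Matrix.diagonal_transpose]
    rw [Matrix.mul_assoc, Matrix.mul_assoc, h1]
    rw [← Matrix.mul_assoc, Matrix.trace_mul_comm, ← Matrix.mul_assoc, hV i,
      Matrix.one_mul, Matrix.trace_diagonal]
  have hOO : ∀ i, frobInner (blk O i) (blk O i) = (r i : ℝ) := by
    intro i
    have h1 : (U i)ᵀ * (U i * (V i)ᵀ) = (V i)ᵀ := by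
      rw [← Matrix.mul_assoc, hU i, Matrix.one_mul]
    rw [frobInner_eq_trace, hO i, Matrix.transpose_mul, Matrix.transpose_transpose]
    rw [Matrix.mul_assoc, h1, Matrix.trace_mul_comm, hV i, Matrix.trace_one]
    simp
  have hW : W - η • O = W + (-η) • O := by
    rw [neg_smul, ← sub_eq_add_neg]
  have key := hsmooth ((-η) • O)
  rw [← hW] at key
  have e1 : frobInner G ((-η) • O) = -η * (∑ i, ∑ s, σ i s) := by
    rw [frobInner_smul_right, frobInner_split]
    simp only [hGO]
  have e2 : frobInner ((-η) • O) ((-η) • O) = η ^ 2 * (∑ i, ((blk G i).rank : ℝ)) := by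
    rw [frobInner_smul_right, frobInner_smul_left, frobInner_split]
    simp only [hOO, hr]
    ring
  rw [e1, e2] at key
  calc L (W - η • O) ≤ L W + -η * (∑ i, ∑ s, σ i s)
        + β / 2 * (η ^ 2 * (∑ i, ((blk G i).rank : ℝ))) := key
    _ = L W - η * (∑ i, ∑ s, σ i s)
        + β * η ^ 2 / 2 * (∑ i, ((blk G i).rank : ℝ)) := by ring
end

section
/- Let G ∈ ℝ^{m×d} be partitioned row-wise into blocks G_1,…,G_M whose row spaces (spans of rows, i.e., column spaces of G_iᵀ) are pairwise orthogonal. Then ‖G‖_* = Σ_{i=1}^M ‖G_i‖_*. -/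
open Matrix BigOperators

/-- `Y` has operator (spectral) norm at most 1. -/
def opNormLeOne {m n : Type*} [Fintype m] [Fintype n] (Y : Matrix m n ℝ) : Prop :=
  ∀ x : n → ℝ, ∑ i, (Y.mulVec x i) ^ 2 ≤ ∑ j, (x j) ^ 2

/-- Nuclear norm via its dual characterization ‖X‖_* = sup{⟨X,Y⟩ : ‖Y‖_op ≤ 1}. -/
noncomputable def nuclearNorm {m n : Type*} [Fintype m] [Fintype n]
    (X : Matrix m n ℝ) : ℝ := sSup {c | ∃ Y, opNormLeOne Y ∧ frobInner X Y = c}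

/-! ### Auxiliary facts about the dual characterization -/

section aux
variable {m n : Type*} [Fintype m] [Fintype n]

lemma aux_opNormLeOne_zero : opNormLeOne (0 : Matrix m n ℝ) := by
  intro x
  simp only [Matrix.zero_mulVec, Pi.zero_apply]
  have : (∑ _i : m, (0:ℝ) ^ 2) = 0 := by simp
  rw [this]
  exact Finset.sum_nonneg fun j _ => sq_nonneg _

lemma aux_nonempty (X : Matrix m n ℝ) :
    Set.Nonempty {c | ∃ Y, opNormLeOne Y ∧ frobInner X Y = c} :=
  ⟨frobInner X 0, 0, aux_opNormLeOne_zero, rfl⟩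

lemma aux_entry_sq_le_one [DecidableEq n] {Y : Matrix m n ℝ} (hY : opNormLeOne Y) (i : m) (j : n) :
    Y i j ^ 2 ≤ 1 := by
  have h := hY (fun k => if k = j then 1 else 0)
  have h1 : ∀ i', Y.mulVec (fun k => if k = j then 1 else 0) i' = Y i' j := by
    intro i'
    simp [Matrix.mulVec, dotProduct, mul_ite]
  have h2 : (∑ k : n, (if k = j then (1:ℝ) else 0) ^ 2) = 1 := by
    simp
  rw [h2] at h
  simp only [h1] at h
  calc Y i j ^ 2 ≤ ∑ i', Y i' j ^ 2 :=
        Finset.single_le_sum (f := fun i' => Y i' j ^ 2)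
          (fun i' _ => sq_nonneg _) (Finset.mem_univ i)
    _ ≤ 1 := h

lemma aux_bddAbove (X : Matrix m n ℝ) :
    BddAbove {c | ∃ Y, opNormLeOne Y ∧ frobInner X Y = c} := by
  classical
  refine ⟨∑ i, ∑ j, |X i j|, ?_⟩
  rintro c ⟨Y, hY, rfl⟩
  refine Finset.sum_le_sum fun i _ => Finset.sum_le_sum fun j _ => ?_
  have h1 : |Y i j| ≤ 1 := by
    have := aux_entry_sq_le_one hY i j
    nlinarith [abs_nonneg (Y i j), sq_abs (Y i j)]
  calc X i j * Y i j ≤ |X i j * Y i j| := le_abs_self _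
    _ = |X i j| * |Y i j| := abs_mul _ _
    _ ≤ |X i j| * 1 := mul_le_mul_of_nonneg_left h1 (abs_nonneg _)
    _ = |X i j| := mul_one _

lemma aux_frob_le_nuclear {X Y : Matrix m n ℝ} (hY : opNormLeOne Y) :
    frobInner X Y ≤ nuclearNorm X :=
  le_csSup (aux_bddAbove X) ⟨Y, hY, rfl⟩

lemma aux_nuclear_nonneg (X : Matrix m n ℝ) : 0 ≤ nuclearNorm X := by
  have h := aux_frob_le_nuclear (X := X) (Y := 0) aux_opNormLeOne_zero
  have h0 : frobInner X 0 = 0 := by simp [frobInner]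
  linarith

end aux

/-! ### Orthogonal projection matrices -/

section proj
variable {d : ℕ}

lemma aux_inner_coord (u v : EuclideanSpace ℝ (Fin d)) : inner ℝ u v = ∑ j, u j * v j := by
  simp [PiLp.inner_apply, RCLike.inner_apply, mul_comm]

noncomputable def projMat (V : Submodule ℝ (EuclideanSpace ℝ (Fin d))) : Matrix (Fin d) (Fin d) ℝ :=
  LinearMap.toMatrix'
    ((WithLp.linearEquiv 2 ℝ (Fin d → ℝ)).toLinearMap ∘ₗ
      ((V.subtypeL ∘L V.orthogonalProjectionOnto :
      EuclideanSpace ℝ (Fin d) →ₗ[ℝ] EuclideanSpace ℝ (Fin d))) ∘ₗ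
      (WithLp.linearEquiv 2 ℝ (Fin d → ℝ)).symm.toLinearMap)

lemma projMat_mulVec (V : Submodule ℝ (EuclideanSpace ℝ (Fin d))) (x : EuclideanSpace ℝ (Fin d)) :
    (projMat V).mulVec x = (V.orthogonalProjectionOnto x : EuclideanSpace ℝ (Fin d)) := by
  rw [projMat, ← Matrix.toLin'_apply, Matrix.toLin'_toMatrix']
  rfl

lemma projMat_apply (V : Submodule ℝ (EuclideanSpace ℝ (Fin d))) (p q : Fin d) :
    projMat V p q
      = (V.orthogonalProjectionOnto (EuclideanSpace.single q 1) : EuclideanSpace ℝ (Fin d)) p := by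
  have h : (projMat V *ᵥ (Pi.single q 1 : Fin d → ℝ)) p
      = (V.orthogonalProjectionOnto (EuclideanSpace.single q 1) : EuclideanSpace ℝ (Fin d)) p :=
    congrFun (projMat_mulVec V (EuclideanSpace.single q 1)) p
  rw [Matrix.mulVec_single] at h
  simpa using h

lemma projMat_symm (V : Submodule ℝ (EuclideanSpace ℝ (Fin d))) (k j : Fin d) :
    projMat V k j = projMat V j k := by
  rw [projMat_apply, projMat_apply]
  have h := Submodule.inner_starProjection_left_eq_right V
    (EuclideanSpace.single k (1:ℝ)) (EuclideanSpace.single j (1:ℝ))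
  simp only [EuclideanSpace.inner_single_left, EuclideanSpace.inner_single_right] at h
  simpa using h.symm

lemma projMat_mulVec_of_mem {V : Submodule ℝ (EuclideanSpace ℝ (Fin d))}
    {x : EuclideanSpace ℝ (Fin d)} (hx : x ∈ V) :
    (projMat V).mulVec x = x := by
  exact (projMat_mulVec V x).trans (congrArg WithLp.ofLp ((Submodule.starProjection_eq_self_iff (K := V) (v := x)).mpr hx))

open scoped RealInnerProductSpace in
lemma sum_proj_le {M : ℕ} (V : Fin M → Submodule ℝ (EuclideanSpace ℝ (Fin d)))
    (hV : ∀ i j, i ≠ j → V i ⟂ V j) (x : EuclideanSpace ℝ (Fin d)) :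
    ∑ i, ∑ k, ((projMat (V i)).mulVec x k) ^ 2 ≤ ∑ k, (x k) ^ 2 := by
  set y : Fin M → EuclideanSpace ℝ (Fin d) :=
    fun i => ((V i).orthogonalProjectionOnto x : EuclideanSpace ℝ (Fin d)) with hy
  have hyv : ∀ i, (projMat (V i)).mulVec x = y i := fun i => projMat_mulVec _ _
  have hsum : ∀ i, ∑ k, ((projMat (V i)).mulVec x k) ^ 2 = ⟪y i, y i⟫ := by
    intro i
    rw [aux_inner_coord]
    simp [hyv i, sq]
  set s : ℝ := ∑ i, ⟪y i, y i⟫ with hs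
  have hmem : ∀ i, y i ∈ V i := fun i => ((V i).orthogonalProjectionOnto x).2
  have h1 : ∀ i, ⟪x, y i⟫ = ⟪y i, y i⟫ := by
    intro i
    have hsub : x - y i ∈ (V i)ᗮ :=
      Submodule.sub_starProjection_mem_orthogonal x
    have h2 : ⟪y i, x - y i⟫ = 0 := hsub (y i) (hmem i)
    rw [inner_sub_right] at h2
    have h3 := sub_eq_zero.mp h2
    rw [real_inner_comm] at h3
    linarith [h3]
  have h2 : ∀ i j, i ≠ j → ⟪y i, y j⟫ = 0 := fun i j hij =>
    (hV i j hij).inner_eq (hmem i) (hmem j)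
  set z : EuclideanSpace ℝ (Fin d) := ∑ i, y i with hz
  have hxz : ⟪x, z⟫ = s := by
    rw [hz, inner_sum]
    exact Finset.sum_congr rfl fun i _ => h1 i
  have hzz : ⟪z, z⟫ = s := by
    rw [hz, sum_inner]
    refine Finset.sum_congr rfl fun i _ => ?_
    rw [inner_sum]
    rw [Finset.sum_eq_single_of_mem i (Finset.mem_univ i)]
    intro j _ hji
    exact h2 i j (Ne.symm hji)
  have hcs := real_inner_mul_inner_self_le x z
  rw [hxz, hzz] at hcs
  have hsnn : 0 ≤ s := Finset.sum_nonneg fun i _ => real_inner_self_nonneg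
  have hxx : ⟪x, x⟫ = ∑ k, (x k) ^ 2 := by
    rw [aux_inner_coord]; simp [sq]
  have hfin : s ≤ ∑ k, (x k) ^ 2 := by
    rcases eq_or_lt_of_le hsnn with h | h
    · rw [← h]
      positivity
    · rw [hxx] at hcs
      nlinarith
  calc ∑ i, ∑ k, ((projMat (V i)).mulVec x k) ^ 2 = s := by
        rw [hs]; exact Finset.sum_congr rfl fun i _ => hsum i
    _ ≤ _ := hfin

lemma aux_mul_projMat {m' : Type*} [Fintype m'] (A : Matrix m' (Fin d) ℝ)
    (V : Submodule ℝ (EuclideanSpace ℝ (Fin d))) (w : m' → EuclideanSpace ℝ (Fin d))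
    (hw : ∀ a j, w a j = A a j) (h : ∀ a, w a ∈ V) :
    A * projMat V = A := by
  ext a j
  rw [Matrix.mul_apply]
  calc ∑ k, A a k * projMat V k j = (projMat V).mulVec (w a) j := by
        simp only [Matrix.mulVec, dotProduct]
        refine Finset.sum_congr rfl fun k _ => ?_
        rw [projMat_symm, hw a k]
        ring
    _ = w a j := congrFun (projMat_mulVec_of_mem (h a)) j
    _ = A a j := hw a j

lemma aux_projMat_transpose (V : Submodule ℝ (EuclideanSpace ℝ (Fin d))) :
    (projMat V)ᵀ = projMat V := by
  ext k j
  rw [Matrix.transpose_apply]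
  exact projMat_symm V j k

end proj

/-! ### Block lemmas -/

section blocks
variable {M d : ℕ} {ms : Fin M → ℕ}

lemma aux_sigma_sum (f : ((i : Fin M) × Fin (ms i)) → ℝ) :
    ∑ p : (i : Fin M) × Fin (ms i), f p = ∑ i, ∑ a, f ⟨i, a⟩ := by
  rw [← Finset.univ_sigma_univ, Finset.sum_sigma]

lemma aux_frob_blocks (A B : Matrix ((i : Fin M) × Fin (ms i)) (Fin d) ℝ) :
    frobInner A B = ∑ i, frobInner (blk A i) (blk B i) := by
  rw [frobInner, aux_sigma_sum (f := fun p => ∑ j, A p j * B p j)]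
  rfl

lemma aux_blk_opNorm {Y : Matrix ((i : Fin M) × Fin (ms i)) (Fin d) ℝ}
    (hY : opNormLeOne Y) (i : Fin M) : opNormLeOne (blk Y i) := by
  intro x
  have h1 : ∑ a, ((blk Y i).mulVec x a) ^ 2 = ∑ a, (Y.mulVec x ⟨i, a⟩) ^ 2 := rfl
  rw [h1]
  calc ∑ a, (Y.mulVec x ⟨i, a⟩) ^ 2
      ≤ ∑ i', ∑ a, (Y.mulVec x ⟨i', a⟩) ^ 2 :=
        Finset.single_le_sum (f := fun i' => ∑ a, (Y.mulVec x ⟨i', a⟩) ^ 2)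
          (fun i' _ => Finset.sum_nonneg fun a _ => sq_nonneg _) (Finset.mem_univ i)
    _ = ∑ p : (i : Fin M) × Fin (ms i), (Y.mulVec x p) ^ 2 :=
        (aux_sigma_sum (f := fun p => (Y.mulVec x p) ^ 2)).symm
    _ ≤ ∑ j, (x j) ^ 2 := hY x

lemma aux_frob_mul_right {m' : Type*} [Fintype m'] (A B : Matrix m' (Fin d) ℝ)
    (Q : Matrix (Fin d) (Fin d) ℝ) :
    frobInner A (B * Q) = frobInner (A * Qᵀ) B := by
  unfold frobInner
  refine Finset.sum_congr rfl fun a _ => ?_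
  simp only [Matrix.mul_apply, Matrix.transpose_apply, Finset.mul_sum, Finset.sum_mul]
  rw [Finset.sum_comm]
  refine Finset.sum_congr rfl fun k _ => Finset.sum_congr rfl fun j _ => ?_
  ring

end blocks

/-- If the row spaces of the blocks are pairwise orthogonal (every row of Gᵢ is
orthogonal to every row of Gⱼ for i ≠ j, i.e. Gᵢ Gⱼᵀ = 0), then the nuclear norm
is additive across the partition: ‖G‖_* = ∑ᵢ ‖Gᵢ‖_*. -/
theorem nuclearNorm_additive_of_orthogonal_row_spaces
    {M d : ℕ} {ms : Fin M → ℕ}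
    (G : Matrix ((i : Fin M) × Fin (ms i)) (Fin d) ℝ)
    (horth : ∀ i j, i ≠ j → blk G i * (blk G j)ᵀ = 0) :
    nuclearNorm G = ∑ i, nuclearNorm (blk G i) := by
  classical
  -- row vectors of the blocks, as elements of Euclidean space
  set r : (i : Fin M) → Fin (ms i) → EuclideanSpace ℝ (Fin d) :=
    fun i a => WithLp.toLp 2 (fun j => G ⟨i, a⟩ j) with hr
  set V : Fin M → Submodule ℝ (EuclideanSpace ℝ (Fin d)) :=
    fun i => Submodule.span ℝ (Set.range (r i)) with hV
  have hVorth : ∀ i j, i ≠ j → V i ⟂ V j := by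
    intro i j hij
    rw [hV]
    refine Submodule.isOrtho_span.mpr ?_
    rintro u ⟨a, rfl⟩ v ⟨b, rfl⟩
    have h0 : (blk G i * (blk G j)ᵀ) a b = 0 := by rw [horth i j hij]; rfl
    rw [Matrix.mul_apply] at h0
    rw [aux_inner_coord]
    simpa [blk, Matrix.transpose_apply] using h0
  have hrmem : ∀ i a, r i a ∈ V i := fun i a =>
    Submodule.subset_span (Set.mem_range_self a)
  apply le_antisymm
  · -- upper bound
    refine csSup_le (aux_nonempty G) ?_
    rintro c ⟨Y, hY, rfl⟩
    rw [aux_frob_blocks G Y]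
    exact Finset.sum_le_sum fun i _ => aux_frob_le_nuclear (aux_blk_opNorm hY i)
  · -- lower bound
    refine le_of_forall_pos_le_add fun ε hε => ?_
    set ε' : ℝ := ε / (M + 1) with hε'
    have hε'pos : 0 < ε' := by positivity
    have hchoice : ∀ i : Fin M, ∃ Z : Matrix (Fin (ms i)) (Fin d) ℝ,
        opNormLeOne Z ∧ nuclearNorm (blk G i) - ε' < frobInner (blk G i) Z := by
      intro i
      have hlt : nuclearNorm (blk G i) - ε' < nuclearNorm (blk G i) := by linarith
      obtain ⟨c, ⟨Z, hZ, rfl⟩, hc⟩ :=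
        exists_lt_of_lt_csSup (aux_nonempty (blk G i)) hlt
      exact ⟨Z, hZ, hc⟩
    choose Ys hYop hYlt using hchoice
    -- assemble the certificate matrix
    set Ybig : Matrix ((i : Fin M) × Fin (ms i)) (Fin d) ℝ :=
      Matrix.of (fun p j => (Ys p.1 * projMat (V p.1)) p.2 j) with hYbig
    have hblkY : ∀ i, blk Ybig i = Ys i * projMat (V i) := fun i => rfl
    have hYbigOp : opNormLeOne Ybig := by
      intro x
      have hs : ∑ p : (i : Fin M) × Fin (ms i), (Ybig.mulVec x p) ^ 2
          = ∑ i, ∑ a, ((Ys i * projMat (V i)).mulVec x a) ^ 2 := by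
        rw [aux_sigma_sum (f := fun p => (Ybig.mulVec x p) ^ 2)]
        rfl
      rw [hs]
      have hstep : ∀ i, ∑ a, ((Ys i * projMat (V i)).mulVec x a) ^ 2
          ≤ ∑ k, ((projMat (V i)).mulVec x k) ^ 2 := by
        intro i
        have hmm : (Ys i * projMat (V i)).mulVec x
            = (Ys i).mulVec ((projMat (V i)).mulVec x) :=
          (Matrix.mulVec_mulVec x (Ys i) (projMat (V i))).symm
        rw [hmm]
        exact hYop i ((projMat (V i)).mulVec x)
      calc ∑ i, ∑ a, ((Ys i * projMat (V i)).mulVec x a) ^ 2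
          ≤ ∑ i, ∑ k, ((projMat (V i)).mulVec x k) ^ 2 :=
            Finset.sum_le_sum fun i _ => hstep i
        _ ≤ ∑ k, (x k) ^ 2 := sum_proj_le V hVorth (WithLp.toLp 2 x)
    have hfrob : frobInner G Ybig = ∑ i, frobInner (blk G i) (Ys i) := by
      rw [aux_frob_blocks G Ybig]
      refine Finset.sum_congr rfl fun i _ => ?_
      rw [hblkY i, aux_frob_mul_right, aux_projMat_transpose]
      rw [aux_mul_projMat (blk G i) (V i) (r i) (fun a j => rfl) (fun a => hrmem i a)]
    have hle : frobInner G Ybig ≤ nuclearNorm G := aux_frob_le_nuclear hYbigOp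
    have hsum : ∑ i, nuclearNorm (blk G i) ≤ frobInner G Ybig + M * ε' := by
      rw [hfrob]
      have hterm : ∀ i, nuclearNorm (blk G i) ≤ frobInner (blk G i) (Ys i) + ε' :=
        fun i => by linarith [hYlt i]
      calc ∑ i, nuclearNorm (blk G i)
          ≤ ∑ i, (frobInner (blk G i) (Ys i) + ε') := Finset.sum_le_sum fun i _ => hterm i
        _ = ∑ i, frobInner (blk G i) (Ys i) + M * ε' := by
            rw [Finset.sum_add_distrib, Finset.sum_const, Finset.card_univ, Fintype.card_fin,
              nsmul_eq_mul]
    have hMe : (M : ℝ) * ε' ≤ ε := by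
      have h1 : (0:ℝ) < (M:ℝ) + 1 := by positivity
      have h2 : (M:ℝ) * ε' ≤ ((M:ℝ) + 1) * ε' :=
        mul_le_mul_of_nonneg_right (by linarith) hε'pos.le
      have h3 : ((M:ℝ) + 1) * ε' = ε := by
        rw [hε']; field_simp
      linarith
    linarith
end
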